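/- The coproduct of the U_q(sl_2)-Casimir element Λ satisfies Δ(Λ) = Λ ⊗ K⁻¹ + K ⊗ Λ − (q + q⁻¹) K ⊗ K⁻¹ + (q − q⁻¹)² (E ⊗ F + q⁻² F K ⊗ E K⁻¹). -/
import Mathlib


open TensorProduct

variable {𝕜 A : Type*} [Field 𝕜] [Ring A] [Algebra 𝕜 A]

/-- The Casimir element `Λ = (q − q⁻¹)² E F + q⁻¹ K + q K⁻¹` of `U_q(sl₂)`. -/
def casimir (q : 𝕜) (E F K K' : A) : A :=
  (q - q⁻¹) ^ 2 • (E * F) + q⁻¹ • K + q • K'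

/-- `Δ(Λ) = Λ⊗K⁻¹ + K⊗Λ − (q+q⁻¹) K⊗K⁻¹ + (q−q⁻¹)²(E⊗F + q⁻² FK⊗EK⁻¹)`. -/
theorem coproduct_casimir (q : 𝕜) (hq : q ≠ 0) (hroot : ∀ n : ℕ, 0 < n → q ^ n ≠ 1)
    (E F K K' : A)
    (hKK' : K * K' = 1) (hK'K : K' * K = 1)
    (hKE : K * E = q ^ 2 • (E * K))
    (hKF : K * F = (q ^ 2)⁻¹ • (F * K))
    (hEF : E * F - F * E = (q - q⁻¹)⁻¹ • (K - K'))
    (Δ : A →ₐ[𝕜] A ⊗[𝕜] A)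
    (hΔE : Δ E = E ⊗ₜ 1 + K ⊗ₜ E)
    (hΔF : Δ F = F ⊗ₜ K' + 1 ⊗ₜ F)
    (hΔK : Δ K = K ⊗ₜ K)
    (hΔK' : Δ K' = K' ⊗ₜ K') :
    Δ (casimir q E F K K') =
      casimir q E F K K' ⊗ₜ K' + K ⊗ₜ casimir q E F K K'
        - (q + q⁻¹) • (K ⊗ₜ K')
        + (q - q⁻¹) ^ 2 • (E ⊗ₜ F + (q ^ 2)⁻¹ • ((F * K) ⊗ₜ (E * K'))) := by
  have key : Δ E * Δ F =
      (E * F) ⊗ₜ K' + E ⊗ₜ F + (q ^ 2)⁻¹ • ((F * K) ⊗ₜ (E * K')) + K ⊗ₜ (E * F) := by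
    rw [hΔE, hΔF]
    simp only [add_mul, mul_add, Algebra.TensorProduct.tmul_mul_tmul, one_mul, mul_one, hKF,
      smul_tmul']
    abel
  simp only [casimir, map_add, map_smul, map_mul, hΔK, hΔK', key, tmul_add, add_tmul,
    ← smul_tmul', tmul_smul, smul_add]
  match_scalars <;> ring
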